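/- For i ≥ 2, 2 ≤ j ≤ i, and 0 < c_1 < 1, the quasi-steady-state expression c_j = (Σ_{k=1}^{i-j+1} c_1^{k+j-1})/(Σ_{k=1}^{i} c_1^{k-1}) admits, for every n ≥ 1, the expansion c_j = c_1^j + Σ_{k=1}^{n} (-c_1^{ki+1} + c_1^{ki+j}) + O(c_1^{(n+1)i+1}) as c_1 → 0; more precisely, |c_j - c_1^j - Σ_{k=1}^{n}(-c_1^{ki+1} + c_1^{ki+j})| ≤ C·c_1^{(n+1)i+1} for some constant C and all sufficiently small c_1 > 0. -/

import Mathlib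

/-!
Summing the geometric sums, with `x = c₁ ^ i` the quasi-steady-state ratio is
`(c₁ ^ j - c₁ x) / (1 - x) = c₁ ^ j + (c₁ ^ j - c₁) x / (1 - x)`, and the claimed correction is
`(c₁ ^ j - c₁)(x + ⋯ + x ^ n)`. The remainder is therefore exactly `(c₁ ^ j - c₁) x ^ (n + 1) / (1 - x)`,
whose absolute value is at most `2 c₁ x ^ (n + 1)` once `x ≤ c₁ ≤ 1/2`.
-/

open Finset

theorem sum_Icc_one_eq_sum_range {M : Type*} [AddCommMonoid M] (f : ℕ → M) (m : ℕ) :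
    ∑ k ∈ Icc 1 m, f k = ∑ k ∈ range m, f (k + 1) := by
  rw [← Ico_add_one_right_eq_Icc, sum_Ico_eq_sum_range, Nat.add_sub_cancel]
  simp only [add_comm 1]

theorem sum_Icc_one_pow_add_sub_one {R : Type*} [Semiring R] (c : R) (m j : ℕ) :
    ∑ k ∈ Icc 1 m, c ^ (k + j - 1) = c ^ j * ∑ k ∈ range m, c ^ k := by
  rw [sum_Icc_one_eq_sum_range, mul_sum]
  exact sum_congr rfl fun k _ => by rw [← pow_add]; congr 1; omega

section Field

variable {K : Type*} [Field K]

theorem qss_ratio_eq {c : K} (hc : c ≠ 1) {i j : ℕ} (hji : j ≤ i) :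
    (∑ k ∈ Icc 1 (i - j + 1), c ^ (k + j - 1)) / (∑ k ∈ Icc 1 i, c ^ (k - 1))
      = (c ^ j - c ^ (i + 1)) / (1 - c ^ i) := by
  have hnum : (∑ k ∈ Icc 1 (i - j + 1), c ^ (k + j - 1)) * (1 - c) = c ^ j - c ^ (i + 1) := by
    rw [sum_Icc_one_pow_add_sub_one, mul_assoc, mul_comm _ (1 - c), mul_neg_geom_sum, mul_sub,
      mul_one, ← pow_add]
    congr 2
    omega
  have hden : (∑ k ∈ Icc 1 i, c ^ (k - 1)) * (1 - c) = 1 - c ^ i := by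
    have h := sum_Icc_one_pow_add_sub_one c i 0
    simp only [add_zero, pow_zero, one_mul] at h
    rw [h, mul_comm, mul_neg_geom_sum]
  rw [← hnum, ← hden, mul_div_mul_right _ _ (sub_ne_zero.2 hc.symm)]

theorem div_one_sub_sub_sum_Icc_mul_pow (a b : K) {x : K} (hx : x ≠ 1) (n : ℕ) :
    (a - b * x) / (1 - x) - a - ∑ k ∈ Icc 1 n, (a - b) * x ^ k
      = (a - b) * x ^ (n + 1) / (1 - x) := by
  have hsum : ∑ k ∈ Icc 1 n, x ^ k = x * ∑ k ∈ range n, x ^ k := by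
    rw [sum_Icc_one_eq_sum_range, mul_sum]
    exact sum_congr rfl fun k _ => pow_succ' x k
  have h1x : 1 - x ≠ 0 := sub_ne_zero.2 hx.symm
  rw [← mul_sum, hsum, eq_div_iff h1x, sub_mul, sub_mul, div_mul_cancel₀ _ h1x]
  linear_combination (b - a) * x * mul_neg_geom_sum x n

end Field

theorem abs_div_one_sub_le_two_mul_abs {x : ℝ} (hx : x ≤ 1 / 2) (y : ℝ) :
    |y / (1 - x)| ≤ 2 * |y| := by
  rw [abs_div, abs_of_pos (show 0 < 1 - x by linarith), div_le_iff₀ (by linarith)]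
  nlinarith [abs_nonneg y]

theorem stmt_8_general (i j n : ℕ) (hj2 : 2 ≤ j) (hji : j ≤ i) :
    ∃ C : ℝ, ∃ δ : ℝ, 0 < δ ∧ δ ≤ 1 ∧ ∀ c1 : ℝ, 0 < c1 → c1 < δ →
      |(∑ k ∈ Finset.Icc 1 (i - j + 1), c1 ^ (k + j - 1)) /
          (∑ k ∈ Finset.Icc 1 i, c1 ^ (k - 1))
        - c1 ^ j - ∑ k ∈ Finset.Icc 1 n, (-c1 ^ (k * i + 1) + c1 ^ (k * i + j))|
      ≤ C * c1 ^ ((n + 1) * i + 1) := by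
  refine ⟨2, 1 / 2, by norm_num, by norm_num, fun c hc0 hc => ?_⟩
  have hc1 : c < 1 := by linarith
  have hxc : c ^ i ≤ c := pow_le_of_le_one hc0.le hc1.le (by omega)
  have hcorr : ∀ k, -c ^ (k * i + 1) + c ^ (k * i + j) = (c ^ j - c) * (c ^ i) ^ k := fun k => by
    ring
  simp only [hcorr]
  rw [qss_ratio_eq hc1.ne hji, pow_succ',
    div_one_sub_sub_sum_Icc_mul_pow _ _ (hxc.trans_lt hc1).ne n]
  calc |(c ^ j - c) * (c ^ i) ^ (n + 1) / (1 - c ^ i)|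
      ≤ 2 * |(c ^ j - c) * (c ^ i) ^ (n + 1)| :=
        abs_div_one_sub_le_two_mul_abs (by linarith) _
    _ ≤ 2 * (c * (c ^ i) ^ (n + 1)) := by
        have hcj : c ^ j ≤ c := pow_le_of_le_one hc0.le hc1.le (by omega)
        rw [abs_mul, abs_of_nonpos (by linarith), abs_of_pos (by positivity)]
        gcongr
        linarith [pow_pos hc0 j]
    _ = 2 * c ^ ((n + 1) * i + 1) := by ring

/-- Power-series expansion of the quasi-steady-state expression:
`c_j = c_1^j + ∑_{k=1}^n (-c_1^{ki+1} + c_1^{ki+j}) + O(c_1^{(n+1)i+1})` as `c_1 → 0⁺`. -/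
theorem stmt_8 (i j n : ℕ) (hi : 2 ≤ i) (hj2 : 2 ≤ j) (hji : j ≤ i) (hn : 1 ≤ n) :
    ∃ C : ℝ, ∃ δ : ℝ, 0 < δ ∧ δ ≤ 1 ∧ ∀ c1 : ℝ, 0 < c1 → c1 < δ →
      |(∑ k ∈ Finset.Icc 1 (i - j + 1), c1 ^ (k + j - 1)) /
          (∑ k ∈ Finset.Icc 1 i, c1 ^ (k - 1))
        - c1 ^ j - ∑ k ∈ Finset.Icc 1 n, (-c1 ^ (k * i + 1) + c1 ^ (k * i + j))|
      ≤ C * c1 ^ ((n + 1) * i + 1) :=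
  stmt_8_general i j n hj2 hji
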